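/- arXiv:2302.09734 — 4 statements merged into one kernel-verified Lean document; each statement's English description precedes it below -/
import Mathlib

section
/- Let X, Y be sets, l: X × Y → ℝ, and for each x ∈ X let Y*(x) ⊆ Y be the lower-level solution set. Let h: X × Y → Y satisfy: for every x and every y* ∈ Y*(x), h(x, y*) = y* (so h^{(T)}(x, y*) = y* for all T). Suppose (x*, y*) minimizes l over the feasible set {(x,y) : x ∈ X, y ∈ Y*(x)}, (x̄, ȳ) satisfies ȳ ∈ Y*(x̄) and x̄ ∈ argmin_{x∈X} l(x, h^{(T)}(x, ȳ)), and (x̂, ŷ) minimizes l^{(T)}(x,y) := l(x, h^{(T)}(x,y)) over X × Y. Then l^{(T)}(x̂, ŷ) ≤ l(x*, y*) ≤ l^{(T)}(x̄, ȳ). -/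
/-- Sandwich bounds: the `T`-step monopoly value lower-bounds and the
`T`-step Cournot value upper-bounds the bilevel optimum
`l^{(T)}(x̂, ŷ) ≤ l(x*, y*) ≤ l^{(T)}(x̄, ȳ)`. -/
theorem cournot_monopoly_sandwich {X Y : Type*}
    (l : X → Y → ℝ) (Ystar : X → Set Y) (h : X → Y → Y)
    (hfix : ∀ x : X, ∀ y ∈ Ystar x, h x y = y)
    (hT : ℕ → X → Y → Y)
    (hT0 : ∀ (x : X) (y : Y), hT 0 x y = y)
    (hTs : ∀ (t : ℕ) (x : X) (y : Y), hT (t + 1) x y = h x (hT t x y))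
    (T : ℕ)
    -- (x*, y*) solves the bilevel program
    (xs : X) (ys : Y) (hys : ys ∈ Ystar xs)
    (hopt : ∀ x : X, ∀ y ∈ Ystar x, l xs ys ≤ l x y)
    -- (x̄, ȳ) solves the T-step Cournot game
    (xb : X) (yb : Y) (hyb : yb ∈ Ystar xb)
    (hxb : ∀ x : X, l xb (hT T xb yb) ≤ l x (hT T x yb))
    -- (x̂, ŷ) solves the T-step monopoly model
    (xh : X) (yh : Y)
    (hmin : ∀ (x : X) (y : Y), l xh (hT T xh yh) ≤ l x (hT T x y)) :
    l xh (hT T xh yh) ≤ l xs ys ∧ l xs ys ≤ l xb (hT T xb yb) := by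
  have key : ∀ (t : ℕ) (x : X), ∀ y ∈ Ystar x, hT t x y = y := by
    intro t x y hy
    induction t with
    | zero => exact hT0 x y
    | succ n ih => rw [hTs, ih, hfix x y hy]
  constructor
  · have := hmin xs ys
    rwa [key T xs ys hys] at this
  · rw [key T xb yb hyb]
    exact hopt xb yb hyb
end

section
/- Let J = ∇y*(x) and suppose the fixed-point differentiation identity ∇y*(x) = ∇_x h(x, y*) + ∇y*(x)·∇_y h(x, y*) holds at y* = y*(x), together with the recursions ∇_x h^{(t)}(x,y) = ∇_x h(x, h^{(t-1)}(x,y)) + ∇_x h^{(t-1)}(x,y)·∇_y h(x, h^{(t-1)}(x,y)) and ∇_y h^{(t)}(x,y) = ∇_y h(x, h^{(t-1)}(x,y))·∇_y h^{(t-1)}(x,y). Then for every T ≥ 0, ∇y*(x) - ∇_x h^{(T)}(x, y*) = ∇y*(x)·∇_y h^{(T)}(x, y*). -/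
/-- Jacobian recursion identity: with `J = ∇y*(x)`, `A T = ∇_x h^{(T)}(x, y*)`,
`B T = ∇_y h^{(T)}(x, y*)`, `Hx = ∇_x h(x, y*)`, `Hy = ∇_y h(x, y*)`, the
fixed-point identity `J = Hx + J * Hy` and the chain-rule recursions (all
evaluated at the fixed point `y* = y*(x)`) imply
`J - A T = J * B T` for every `T`. -/
theorem jacobian_unrolling_identity {m n : ℕ}
    (J Hx : Matrix (Fin m) (Fin n) ℝ) (Hy : Matrix (Fin n) (Fin n) ℝ)
    (A : ℕ → Matrix (Fin m) (Fin n) ℝ) (B : ℕ → Matrix (Fin n) (Fin n) ℝ)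
    (hA0 : A 0 = 0) (hB0 : B 0 = 1)
    (hArec : ∀ t, A (t + 1) = Hx + A t * Hy)
    (hBrec : ∀ t, B (t + 1) = Hy * B t)
    (hfix : J = Hx + J * Hy) :
    ∀ T : ℕ, J - A T = J * B T := by
  have hBpow : ∀ t, B t = Hy ^ t := by
    intro t
    induction t with
    | zero => simpa using hB0
    | succ t ih => rw [hBrec, ih, pow_succ']
  intro T
  induction T with
  | zero => simp [hA0, hB0]
  | succ T ih =>
    rw [hArec, hBrec, hBpow, ← pow_succ', pow_succ, ← hBpow T,
      ← Matrix.mul_assoc, ← ih]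
    have h1 : J - Hx = J * Hy := sub_eq_of_eq_add' hfix
    rw [Matrix.sub_mul, ← h1]
    abel
end

section
/- Let l*: X → ℝ be differentiable and 1-strongly convex on a convex set X with minimizer x*, and let x̄ ∈ X satisfy the first-order condition ⟨g, x - x̄⟩ ≥ 0 for all x ∈ X, where g is some vector (an inexact gradient). Then ‖x* - x̄‖₂ ≤ ‖∇l*(x̄) - g‖₂. -/
open RealInnerProductSpace

/-- Inexact first-order condition bound: if `l*` is differentiable and
1-strongly convex on a convex set `X` with minimizer `x*`, and `x̄ ∈ X`
satisfies `⟪g, x - x̄⟫ ≥ 0` for all `x ∈ X` for some (inexact gradient)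
vector `g`, then `‖x* - x̄‖ ≤ ‖∇l*(x̄) - g‖`. -/
theorem inexact_first_order_bound {m : ℕ}
    (X : Set (EuclideanSpace ℝ (Fin m))) (hX : Convex ℝ X)
    (lstar : EuclideanSpace ℝ (Fin m) → ℝ)
    (glstar : EuclideanSpace ℝ (Fin m) → EuclideanSpace ℝ (Fin m))
    (hdiff : ∀ x, HasGradientAt lstar (glstar x) x)
    (hsc : ∀ z ∈ X, ∀ w ∈ X,
      lstar w + ⟪glstar w, z - w⟫ + 1 / 2 * ‖z - w‖ ^ 2 ≤ lstar z)
    (xs : EuclideanSpace ℝ (Fin m)) (hxs : xs ∈ X)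
    (hmin : ∀ x ∈ X, lstar xs ≤ lstar x)
    (xb : EuclideanSpace ℝ (Fin m)) (hxb : xb ∈ X)
    (g : EuclideanSpace ℝ (Fin m))
    (hFO : ∀ x ∈ X, 0 ≤ ⟪g, x - xb⟫) :
    ‖xs - xb‖ ≤ ‖glstar xb - g‖ := by
  -- First-order optimality at xs: 0 ≤ ⟪glstar xs, xb - xs⟫
  have hopt : 0 ≤ ⟪glstar xs, xb - xs⟫ := by
    have hmin' : IsLocalMinOn lstar X xs := (isMinOn_iff.2 hmin).localize
    have hfd : HasFDerivWithinAt lstar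
        (InnerProductSpace.toDual ℝ _ (glstar xs)) X xs :=
      ((hasGradientAt_iff_hasFDerivAt.1 (hdiff xs)).hasFDerivWithinAt)
    have hy : xb - xs ∈ posTangentConeAt X xs :=
      sub_mem_posTangentConeAt_of_segment_subset (hX.segment_subset hxs hxb)
    simpa using hmin'.hasFDerivWithinAt_nonneg hfd hy
  have h1 := hsc xs hxs xb hxb
  have h2 := hsc xb hxb xs hxs
  have hnorm : ‖xb - xs‖ = ‖xs - xb‖ := by rw [norm_sub_rev]
  have hsum : ‖xs - xb‖ ^ 2 ≤ ⟪glstar xb, xb - xs⟫ := by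
    have : ⟪glstar xb, xs - xb⟫ = -⟪glstar xb, xb - xs⟫ := by
      rw [← inner_neg_right]; congr 1; abel
    have hnorm2 : ‖xb - xs‖ ^ 2 = ‖xs - xb‖ ^ 2 := by rw [hnorm]
    linarith [h1, h2, hopt, this, hnorm2]
  have hg : ⟪g, xb - xs⟫ ≤ 0 := by
    have := hFO xs hxs
    have h : ⟪g, xb - xs⟫ = -⟪g, xs - xb⟫ := by
      rw [← inner_neg_right]; congr 1; abel
    linarith [this, h]
  have hsplit : ⟪glstar xb, xb - xs⟫ ≤ ⟪glstar xb - g, xb - xs⟫ := by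
    rw [inner_sub_left]; linarith
  have hcs : ⟪glstar xb - g, xb - xs⟫ ≤ ‖glstar xb - g‖ * ‖xs - xb‖ := by
    calc ⟪glstar xb - g, xb - xs⟫ ≤ ‖glstar xb - g‖ * ‖xb - xs‖ := real_inner_le_norm _ _
    _ = ‖glstar xb - g‖ * ‖xs - xb‖ := by rw [hnorm]
  have key : ‖xs - xb‖ ^ 2 ≤ ‖glstar xb - g‖ * ‖xs - xb‖ := by linarith
  rcases eq_or_lt_of_le (norm_nonneg (xs - xb)) with h0 | h0
  · rw [← h0]; exact norm_nonneg _
  · nlinarith [key]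
end

section
/- For the T-step Cournot duopoly with inverse demand 1 - x - y and gradient-update map h(x,y) = max{y - r(1 - x - 2y)·(-1), 0} interpreted as the projected gradient ascent step h(x,y) = max{y + r(1 - x - 2y), 0}: for T = 0 the equilibrium is the classic Cournot equilibrium (x̄, ȳ) = (1/3, 1/3) with Firm A profit 1/9, and as T → ∞ the Firm A equilibrium profit converges to the Stackelberg profit 1/8. -/
/-- One projected-gradient-ascent step of Firm B: `h(x, y) = max{y + r(1 - x - 2y), 0}`. -/
noncomputable def duopolyStep (r x y : ℝ) : ℝ := max (y + r * (1 - x - 2 * y)) 0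

/-- `T`-fold iteration `h^{(T)}(x, ·)` of the update map. -/
noncomputable def duopolyIter (r : ℝ) : ℕ → ℝ → ℝ → ℝ
  | 0, _, y => y
  | T + 1, x, y => duopolyStep r x (duopolyIter r T x y)

lemma step_fixed (r x : ℝ) (hr0 : 0 < r) :
    duopolyStep r x (max ((1 - x) / 2) 0) = max ((1 - x) / 2) 0 := by
  unfold duopolyStep
  rcases le_or_gt x 1 with h | h
  · have h1 : max ((1 - x) / 2) 0 = (1 - x) / 2 := max_eq_left (by linarith)
    rw [h1]
    have h2 : (1 - x) / 2 + r * (1 - x - 2 * ((1 - x) / 2)) = (1 - x) / 2 := by ring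
    rw [h2, max_eq_left (by linarith)]
  · have h1 : max ((1 - x) / 2) 0 = 0 := max_eq_right (by linarith)
    rw [h1]
    exact max_eq_right (by nlinarith)

lemma step_contract (r x y y' : ℝ) (hr1 : r < 1 / 2) :
    |duopolyStep r x y - duopolyStep r x y'| ≤ (1 - 2 * r) * |y - y'| := by
  unfold duopolyStep
  calc |max (y + r * (1 - x - 2 * y)) 0 - max (y' + r * (1 - x - 2 * y')) 0|
      ≤ |(y + r * (1 - x - 2 * y)) - (y' + r * (1 - x - 2 * y'))| :=
        abs_max_sub_max_le_abs _ _ _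
    _ = |(1 - 2 * r) * (y - y')| := by ring_nf
    _ = (1 - 2 * r) * |y - y'| := by
        rw [abs_mul, abs_of_nonneg (by linarith : (0:ℝ) ≤ 1 - 2 * r)]

lemma iter_fixed (r x : ℝ) (hr0 : 0 < r) :
    ∀ T, duopolyIter r T x (max ((1 - x) / 2) 0) = max ((1 - x) / 2) 0
  | 0 => rfl
  | T + 1 => by
    show duopolyStep r x (duopolyIter r T x (max ((1 - x) / 2) 0)) = _
    rw [iter_fixed r x hr0 T, step_fixed r x hr0]

lemma iter_bound (r x y : ℝ) (hr0 : 0 < r) (hr1 : r < 1 / 2) :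
    ∀ T, |duopolyIter r T x y - max ((1 - x) / 2) 0| ≤
      (1 - 2 * r) ^ T * |y - max ((1 - x) / 2) 0|
  | 0 => by simp [duopolyIter]
  | T + 1 => by
    have ih := iter_bound r x y hr0 hr1 T
    calc |duopolyIter r (T + 1) x y - max ((1 - x) / 2) 0|
        = |duopolyStep r x (duopolyIter r T x y) - duopolyStep r x (max ((1 - x) / 2) 0)| := by
          rw [step_fixed r x hr0]; rfl
      _ ≤ (1 - 2 * r) * |duopolyIter r T x y - max ((1 - x) / 2) 0| :=
          step_contract r x _ _ hr1
      _ ≤ (1 - 2 * r) * ((1 - 2 * r) ^ T * |y - max ((1 - x) / 2) 0|) :=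
          mul_le_mul_of_nonneg_left ih (by linarith)
      _ = (1 - 2 * r) ^ (T + 1) * |y - max ((1 - x) / 2) 0| := by ring

/-- T-step Cournot duopoly (inverse demand `1 - x - y`, step size `0 < r < 1/2`):
for `T = 0` the equilibrium is the classic Cournot equilibrium
`(x̄, ȳ) = (1/3, 1/3)` with Firm A profit `1/9`; and for any family of
`T`-step Cournot equilibria `(x̄_T, ȳ_T)`, Firm A's equilibrium profit
converges to the Stackelberg profit `1/8` as `T → ∞`. -/
theorem t_step_cournot_duopoly (r : ℝ) (hr0 : 0 < r) (hr1 : r < 1 / 2) :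
    -- T = 0: (1/3, 1/3) is a Cournot equilibrium with Firm A profit 1/9
    ((∀ x : ℝ, 0 ≤ x →
        x * (1 - x - 1/3) ≤ (1/3 : ℝ) * (1 - 1/3 - 1/3)) ∧
      (1/3 : ℝ) = max ((1 - 1/3) / 2) 0 ∧
      (1/3 : ℝ) * (1 - 1/3 - 1/3) = 1/9) ∧
    -- T → ∞: equilibrium profit converges to the Stackelberg profit 1/8
    (∀ xbar ybar : ℕ → ℝ,
      (∀ T, 0 ≤ xbar T) →
      -- ȳ_T is Firm B's best response to x̄_T (the fixed point of the dynamics)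
      (∀ T, ybar T = max ((1 - xbar T) / 2) 0) →
      -- x̄_T maximizes x ↦ l(x, h^{(T)}(x, ȳ_T)) over x ≥ 0
      (∀ T, ∀ x : ℝ, 0 ≤ x →
        x * (1 - x - duopolyIter r T x (ybar T)) ≤
          xbar T * (1 - xbar T - duopolyIter r T (xbar T) (ybar T))) →
      Filter.Tendsto (fun T => xbar T * (1 - xbar T - ybar T))
        Filter.atTop (nhds (1/8))) := by
  constructor
  · refine ⟨fun x hx => by nlinarith [sq_nonneg (x - 1/3)], ?_, by norm_num⟩
    rw [show ((1:ℝ) - 1/3) / 2 = 1/3 by norm_num, max_eq_left (by norm_num)]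
  · intro xbar ybar hx hy hmax
    set c := 1 - 2 * r with hc
    have hc0 : 0 < c := by rw [hc]; linarith
    have hc1 : c < 1 := by rw [hc]; linarith
    have hyb : ∀ T, 0 ≤ ybar T ∧ ybar T ≤ 1 / 2 := by
      intro T
      rw [hy T]
      exact ⟨le_max_right _ _, max_le (by linarith [hx T]) (by norm_num)⟩
    have hfix : ∀ T, duopolyIter r T (xbar T) (ybar T) = ybar T := by
      intro T
      conv_lhs => rw [hy T]
      rw [iter_fixed r _ hr0 T, ← hy T]
    have hub : ∀ T, xbar T * (1 - xbar T - ybar T) ≤ 1 / 8 := by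
      intro T
      have hx0 := hx T
      rcases le_or_gt (xbar T) 1 with h | h
      · have h1 : ybar T = (1 - xbar T) / 2 := by
          rw [hy T]; exact max_eq_left (by linarith)
        rw [h1]; nlinarith [sq_nonneg (xbar T - 1/2)]
      · have h1 : ybar T = 0 := by
          rw [hy T]; exact max_eq_right (by linarith)
        rw [h1]; nlinarith
    have hlb : ∀ T, 1 / 8 - c ^ T / 8 ≤ xbar T * (1 - xbar T - ybar T) := by
      intro T
      have h1 := hmax T (1/2) (by norm_num)
      rw [hfix T] at h1
      have h2 := iter_bound r (1/2) (ybar T) hr0 hr1 T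
      rw [show max ((1 - (1:ℝ)/2) / 2) 0 = 1/4 by norm_num] at h2
      have h4 : |ybar T - 1/4| ≤ 1/4 := by
        obtain ⟨ha, hb⟩ := hyb T
        rw [abs_le]; constructor <;> linarith
      have hcp : (0:ℝ) ≤ c ^ T := (pow_pos hc0 T).le
      have h5 : duopolyIter r T (1/2) (ybar T) - 1/4 ≤ c ^ T * (1/4) :=
        calc duopolyIter r T (1/2) (ybar T) - 1/4 ≤ |duopolyIter r T (1/2) (ybar T) - 1/4| :=
            le_abs_self _
          _ ≤ c ^ T * |ybar T - 1/4| := by rw [hc]; exact h2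
          _ ≤ c ^ T * (1/4) := mul_le_mul_of_nonneg_left h4 hcp
      nlinarith
    have hpow : Filter.Tendsto (fun T => c ^ T) Filter.atTop (nhds 0) :=
      tendsto_pow_atTop_nhds_zero_of_lt_one hc0.le hc1
    have hlo : Filter.Tendsto (fun T => 1 / 8 - c ^ T / 8) Filter.atTop (nhds (1/8)) := by
      have := Filter.Tendsto.sub (tendsto_const_nhds (x := (1:ℝ)/8)) (hpow.div_const 8)
      simpa using this
    exact tendsto_of_tendsto_of_tendsto_of_le_of_le hlo tendsto_const_nhds hlb hub
end
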